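/- In the algebra H of the previous context with χ ∈ ℤ_{≥0}, define e⁻_n by Σ_{n≥0} e⁻_n t^n = exp(-Σ_{r≥1} p⁻_r (-t)^r / r). Then e⁻_n h⁺_m = Σ_{r=0}^{min(m,n)} d_r h⁺_{m-r} e⁻_{n-r}, where Σ_{r≥0} d_r u^r = Π_{g=0}^{χ-1} (1 + q^{χ-(2g+1)} u), i.e., d_r = qdim(Λ^r(V)) with qdim(V) = [χ]. -/

import Mathlib

/-- The quantum integer `[n] = q^{-n+1} + q^{-n+3} + ⋯ + q^{n-1}` in `ℚ(q)`. -/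
noncomputable def qIntF (n : ℕ) : RatFunc ℚ :=
  ∑ g ∈ Finset.range n, RatFunc.X ^ ((n : ℤ) - (2 * g + 1))

/-- The formal exponential `exp f = Σ_{n≥0} f^n / n!` of a formal power series
over a (possibly noncommutative) ℚ-algebra, computed coefficientwise; it is
meaningful when the constant coefficient of `f` is zero. -/
noncomputable def expH {H : Type*} [Ring H] [Algebra ℚ H] (f : PowerSeries H) :
    PowerSeries H :=
  PowerSeries.mk fun d => ∑ n ∈ Finset.range (d + 1),
    ((Nat.factorial n : ℚ)⁻¹) • PowerSeries.coeff d (f ^ n)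

/-!
Let `θ = t d/dt`. Over a `ℚ`-algebra, a series `F` with `θ F = P F` and `P(0) = 0` is
determined by `F(0)`, since `n F_n = Σ_{i ≥ 1} P_i F_{n-i}`. The generating series
`E(t) = exp P⁻(t)` and `H(u) = exp P⁺(u)` are exponentials of series with commuting
coefficients, so `θ E = (θ P⁻) E` and `θ H = (θ P⁺) H`. As
`[kχ]/[k] = Σ_g q^{k(χ-2g-1)} =: A_k`, the relation `[p⁻_k, p⁺_n] = δ_{kn} k A_k` gives
`p⁻_k H(u) = H(u) (p⁻_k + A_k u^k)` by the same uniqueness. For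
`D(u) = Σ d_r u^r = ∏_g (1 + q^{χ-2g-1} u)` one has
`θ D(tu) = (Σ_{k ≥ 1} (-1)^{k+1} A_k (tu)^k) D(tu)`, and with the previous relation this shows
that `E(t) H(u)` and `H(u) D(tu) E(t)` both solve `θ_t F = (θ_t P⁻) F`, with the same constant
term `H(u)`. Comparing coefficients of `t^n u^m` gives the formula.
-/

open Finset

namespace PowerSeries

section Semiring
variable {R : Type*} [Semiring R]

/-- The Euler operator `θ = X d/dX`; unlike `PowerSeries.derivative`, it needs no
commutativity. -/
noncomputable def eulerOp : R⟦X⟧ →+ R⟦X⟧ where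
  toFun f := mk fun n => n • coeff n f
  map_zero' := by ext; simp
  map_add' f g := by ext; simp [smul_add]

theorem eulerOp_apply (f : R⟦X⟧) : eulerOp f = mk fun n => n • coeff n f :=
  rfl

@[simp]
theorem coeff_eulerOp (n : ℕ) (f : R⟦X⟧) : coeff n (eulerOp f) = n • coeff n f :=
  coeff_mk n fun n => n • coeff n f

theorem constantCoeff_eulerOp (f : R⟦X⟧) : constantCoeff (eulerOp f) = 0 := by
  rw [← coeff_zero_eq_constantCoeff_apply, coeff_eulerOp, zero_smul]

theorem eulerOp_C_mul_X_pow (a : R) (k : ℕ) : eulerOp (C a * X ^ k) = k • (C a * X ^ k) := by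
  ext n
  rw [coeff_eulerOp, map_nsmul, coeff_C_mul_X_pow]
  split_ifs with h <;> simp [h]

theorem eulerOp_C (a : R) : eulerOp (C a) = 0 := by
  simpa using eulerOp_C_mul_X_pow a 0

theorem eulerOp_one : eulerOp (1 : R⟦X⟧) = 0 := by
  simpa using eulerOp_C (1 : R)

theorem eulerOp_mul (f g : R⟦X⟧) : eulerOp (f * g) = eulerOp f * g + f * eulerOp g := by
  ext n
  simp only [coeff_eulerOp, map_add, coeff_mul, smul_sum, ← sum_add_distrib]
  refine sum_congr rfl fun p hp => ?_
  rw [HasAntidiagonal.mem_antidiagonal] at hp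
  rw [← hp, add_smul, smul_mul_assoc, mul_smul_comm]

theorem eulerOp_pow_succ {f : R⟦X⟧} (hf : Commute f (eulerOp f)) (k : ℕ) :
    eulerOp (f ^ (k + 1)) = (k + 1) • (eulerOp f * f ^ k) := by
  induction k with
  | zero => simp
  | succ k ih =>
    rw [pow_succ' f (k + 1), eulerOp_mul, ih, mul_smul_comm, ← mul_assoc, hf.eq, mul_assoc,
      ← pow_succ', add_comm, ← succ_nsmul]

theorem constantCoeff_map {S : Type*} [Semiring S] (φ : R →+* S) (f : R⟦X⟧) :
    constantCoeff (map φ f) = φ (constantCoeff f) :=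
  MvPowerSeries.constantCoeff_map φ f

theorem eulerOp_map {S : Type*} [Semiring S] (φ : R →+* S) (f : R⟦X⟧) :
    eulerOp (map φ f) = map φ (eulerOp f) := by
  ext n
  simp

theorem commute_of_forall_coeff_commute {f g : R⟦X⟧}
    (h : ∀ i j, Commute (coeff i f) (coeff j g)) : Commute f g := by
  ext n
  rw [coeff_mul, coeff_mul, ← Nat.sum_antidiagonal_swap]
  exact sum_congr rfl fun p _ => (h p.2 p.1).eq

theorem commute_C_of_forall_commute {z : R} (hz : ∀ y, Commute z y) (f : R⟦X⟧) :
    Commute (C z) f := by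
  ext n
  rw [coeff_C_mul, coeff_mul_C, (hz _).eq]

theorem C_mul_mk_eq_mk_mul_C_add {x : ℕ → R} {b z : R} {k : ℕ}
    (h : ∀ n, b * x n = x n * b + if n = k then z else 0) :
    C b * mk x = mk x * C b + C z * X ^ k := by
  ext n
  simp [coeff_C_mul, coeff_mul_C, h]

theorem coeff_pow_of_lt {f : R⟦X⟧} (hf : constantCoeff f = 0) {d k : ℕ} (h : d < k) :
    coeff d (f ^ k) = 0 :=
  coeff_of_lt_order d ((Nat.cast_lt.2 h).trans_le (le_order_pow_of_constantCoeff_eq_zero k hf))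

end Semiring

section Ring
variable {R : Type*} [Ring R] [Algebra ℚ R]

theorem eq_zero_of_eulerOp_eq_mul {K P : R⟦X⟧} (hP : constantCoeff P = 0)
    (hK : eulerOp K = P * K) (hK0 : constantCoeff K = 0) : K = 0 := by
  ext n
  induction n using Nat.strong_induction_on with
  | _ n ih =>
    rcases n.eq_zero_or_pos with rfl | hn
    · simpa using hK0
    have h := congrArg (coeff n) hK
    rw [coeff_eulerOp, coeff_mul, sum_eq_zero fun p hp => ?_, ← Nat.cast_smul_eq_nsmul ℚ,
      smul_eq_zero] at h
    · exact h.resolve_left (by exact_mod_cast hn.ne')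
    rw [HasAntidiagonal.mem_antidiagonal] at hp
    rcases p.1.eq_zero_or_pos with h1 | h1
    · rw [h1, coeff_zero_eq_constantCoeff_apply, hP, zero_mul]
    · rw [ih p.2 (by omega), map_zero, mul_zero]

theorem constantCoeff_expH (f : R⟦X⟧) : constantCoeff (expH f) = 1 := by
  rw [← coeff_zero_eq_constantCoeff_apply, expH, coeff_mk]
  simp

theorem coeff_expH_eq_coeff_sum {f : R⟦X⟧} (hf : constantCoeff f = 0) {d N : ℕ} (h : d < N) :
    coeff d (expH f) = coeff d (∑ k ∈ range N, ((k.factorial : ℚ)⁻¹) • f ^ k) := by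
  rw [expH, coeff_mk, map_sum]
  refine sum_subset (range_subset_range.2 h) fun k _ hk => ?_
  rw [mem_range, not_lt] at hk
  rw [coeff_pow_of_lt hf (by omega), smul_zero]

theorem eulerOp_sum_inv_factorial_smul_pow {f : R⟦X⟧} (hf : Commute f (eulerOp f)) (N : ℕ) :
    eulerOp (∑ k ∈ range (N + 1), ((k.factorial : ℚ)⁻¹) • f ^ k)
      = eulerOp f * ∑ k ∈ range N, ((k.factorial : ℚ)⁻¹) • f ^ k := by
  rw [map_sum, sum_range_succ', pow_zero, map_rat_smul, eulerOp_one, smul_zero, add_zero,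
    mul_sum]
  refine sum_congr rfl fun k _ => ?_
  rw [map_rat_smul, eulerOp_pow_succ hf, ← Nat.cast_smul_eq_nsmul ℚ, smul_smul,
    Nat.factorial_succ, mul_smul_comm]
  congr 1
  push_cast
  field_simp

theorem eulerOp_expH {f : R⟦X⟧} (hf : constantCoeff f = 0)
    (hcomm : ∀ i j, Commute (coeff i f) (coeff j f)) :
    eulerOp (expH f) = eulerOp f * expH f := by
  have hθ : Commute f (eulerOp f) := commute_of_forall_coeff_commute fun i j => by
    rw [coeff_eulerOp]
    exact (hcomm i j).smul_right j
  ext d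
  rw [coeff_eulerOp, coeff_expH_eq_coeff_sum hf (by omega : d < d + 1 + 1), ← coeff_eulerOp,
    eulerOp_sum_inv_factorial_smul_pow hθ, coeff_mul, coeff_mul]
  refine sum_congr rfl fun p hp => ?_
  rw [HasAntidiagonal.mem_antidiagonal] at hp
  rw [coeff_expH_eq_coeff_sum hf (by omega : p.2 < d + 1)]

theorem C_mul_eq_mul_C_add_of_eulerOp_eq_mul {F P : R⟦X⟧} (hF : eulerOp F = P * F)
    (hP : constantCoeff P = 0) (hF0 : constantCoeff F = 1) {b : R} {c : R⟦X⟧}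
    (hc0 : constantCoeff c = 0) (hθc : Commute (eulerOp c) F)
    (hbP : C b * P = P * C b + eulerOp c) :
    C b * F = F * (C b + c) := by
  refine sub_eq_zero.1 (eq_zero_of_eulerOp_eq_mul hP ?_ (by simp [hF0, hc0]))
  rw [map_sub, eulerOp_mul, eulerOp_mul, map_add, eulerOp_C, hF, ← mul_assoc, hbP, zero_add,
    ← hθc.eq]
  noncomm_ring

theorem mul_C_eq_C_mul_mul_of_eulerOp_eq_mul {F P : R⟦X⟧} (hF : eulerOp F = P * F)
    (hP : constantCoeff P = 0) (hF0 : constantCoeff F = 1) {a : R} {D Q : R⟦X⟧}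
    (hD : eulerOp D = Q * D) (hD0 : constantCoeff D = 1) (hDP : Commute D P)
    (hPa : P * C a = C a * (P + Q)) :
    F * C a = C a * D * F := by
  refine sub_eq_zero.1 (eq_zero_of_eulerOp_eq_mul hP ?_ (by simp [hF0, hD0]))
  have hPCaDF : C a * (Q * D) * F + C a * D * (P * F) = P * C a * D * F := by
    rw [hPa, mul_assoc (C a) D, ← mul_assoc D, hDP.eq]
    noncomm_ring
  rw [map_sub, eulerOp_mul, eulerOp_mul, eulerOp_mul, eulerOp_C, hF, hD, mul_zero, zero_mul,
    zero_add, add_zero, hPCaDF]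
  noncomm_ring

end Ring

theorem eulerOp_prod {R ι : Type*} [CommSemiring R] (s : Finset ι) (F L : ι → R⟦X⟧)
    (h : ∀ i ∈ s, eulerOp (F i) = L i * F i) :
    eulerOp (∏ i ∈ s, F i) = (∑ i ∈ s, L i) * ∏ i ∈ s, F i := by
  induction s using Finset.cons_induction with
  | empty => simp [eulerOp_one]
  | cons a s ha ih =>
    rw [prod_cons, sum_cons, eulerOp_mul, h a (mem_cons_self a s),
      ih fun i hi => h i (mem_cons_of_mem hi)]
    ring

/-- `rescale (-a) (mk 1)` is `(1 + a X)⁻¹`. -/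
theorem eulerOp_one_add_C_mul_X {R : Type*} [CommRing R] (a : R) :
    eulerOp (1 + C a * X) = (1 - rescale (-a) (mk 1)) * (1 + C a * X) := by
  have hinv : rescale (-a) (mk 1) * (1 + C a * X) = 1 := by
    rw [show 1 + C a * X = rescale (-a) (1 - X) by simp [rescale_X], ← map_mul,
      mk_one_mul_one_sub_eq_one, map_one]
  rw [sub_mul, hinv, one_mul, add_sub_cancel_left, map_add, eulerOp_one, zero_add]
  simpa using eulerOp_C_mul_X_pow a 1

section RescaleByX
variable {K H : Type*} [CommSemiring K] [Semiring H]

/-- `f(t) ↦ f(u t)` followed by `φ` on coefficients, with `t` the outer and `u` the inner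
variable. -/
noncomputable def rescaleByX (φ : K →+* H) : K⟦X⟧ →+* H⟦X⟧⟦X⟧ :=
  (map (map φ)).comp ((rescale X).comp (map C))

theorem coeff_rescaleByX (φ : K →+* H) (f : K⟦X⟧) (n : ℕ) :
    coeff n (rescaleByX φ f) = X ^ n * C (φ (coeff n f)) := by
  simp [rescaleByX, coeff_rescale]

theorem constantCoeff_rescaleByX (φ : K →+* H) (f : K⟦X⟧) :
    constantCoeff (rescaleByX φ f) = C (φ (constantCoeff f)) := by
  simpa using coeff_rescaleByX φ f 0

theorem eulerOp_rescaleByX (φ : K →+* H) (f : K⟦X⟧) :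
    eulerOp (rescaleByX φ f) = rescaleByX φ (eulerOp f) := by
  ext1 n
  rw [coeff_eulerOp, coeff_rescaleByX, coeff_rescaleByX, coeff_eulerOp, map_nsmul, map_nsmul,
    mul_smul_comm]

variable [Algebra K H]

theorem commute_rescaleByX_map_C (f : K⟦X⟧) (g : H⟦X⟧) :
    Commute (rescaleByX (algebraMap K H) f) (map C g) :=
  commute_of_forall_coeff_commute fun i j => by
    rw [coeff_rescaleByX, coeff_map]
    exact (commute_X_pow _ _).symm.mul_left
      (commute_C_of_forall_commute (fun y => Algebra.commutes _ y) _)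

theorem map_C_mul_C_eq {P a : H⟦X⟧} {Λ : K⟦X⟧}
    (h : ∀ k, C (coeff k P) * a = a * (C (coeff k P) + X ^ k * C (algebraMap K H (coeff k Λ)))) :
    map C P * C a = C a * (map C P + rescaleByX (algebraMap K H) Λ) := by
  ext1 k
  rw [coeff_mul_C, coeff_C_mul, map_add, coeff_map, coeff_rescaleByX, h]

theorem coeff_coeff_C_mul_rescaleByX_mul_map_C (a : H⟦X⟧) (D : K⟦X⟧) (E : H⟦X⟧) (m n : ℕ) :
    coeff m (coeff n (C a * rescaleByX (algebraMap K H) D * map C E))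
      = ∑ r ∈ range (min m n + 1),
          algebraMap K H (coeff r D) * (coeff (m - r) a * coeff (n - r) E) := by
  have hterm : ∀ r, coeff m (a * (X ^ r * C (algebraMap K H (coeff r D)) * C (coeff (n - r) E)))
      = if r ≤ m then algebraMap K H (coeff r D) * (coeff (m - r) a * coeff (n - r) E)
        else 0 := by
    intro r
    rw [mul_assoc, ← map_mul, ← (commute_X_pow _ r).eq, ← mul_assoc, coeff_mul_X_pow',
      coeff_mul_C, Algebra.left_comm]
  rw [mul_assoc, coeff_C_mul, coeff_mul n, Nat.sum_antidiagonal_eq_sum_range_succ_mk, mul_sum,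
    map_sum]
  simp only [coeff_rescaleByX, coeff_map, hterm]
  rw [← sum_filter]
  congr 1
  ext r
  simp only [mem_filter, mem_range]
  omega

end RescaleByX

end PowerSeries

open PowerSeries

theorem nsmul_inv_natCast_smul {M : Type*} [AddCommGroup M] [Module ℚ M] {n : ℕ} (hn : n ≠ 0)
    (x : M) : n • ((n : ℚ)⁻¹ • x) = x := by
  rw [← Nat.cast_smul_eq_nsmul ℚ, smul_smul, mul_inv_cancel₀ (by exact_mod_cast hn), one_smul]

theorem commute_rat_smul_of_commute {R : Type*} [Ring R] [Module ℚ R] {x : ℕ → R}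
    (hx : ∀ i j, 1 ≤ i → 1 ≤ j → Commute (x i) (x j)) {s : ℕ → ℚ} (hs : s 0 = 0) (i j : ℕ) :
    Commute (s i • x i) (s j • x j) := by
  rcases i.eq_zero_or_pos with rfl | hi
  · simp [hs]
  rcases j.eq_zero_or_pos with rfl | hj
  · simp [hs]
  exact ((hx i j hi hj).smul_left _).smul_right _

theorem sum_zpow_mul_inv_sub {K : Type*} [Field K] {y : K} (hy : y ≠ 0) (n : ℕ) :
    (∑ g ∈ range n, y ^ ((n : ℤ) - (2 * g + 1))) * (y⁻¹ - y) = y ^ (-(n : ℤ)) - y ^ (n : ℤ) := by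
  have htel := sum_range_sub (fun g : ℕ => y ^ ((n : ℤ) - 2 * g)) n
  rw [sum_mul]
  convert htel using 1
  · refine sum_congr rfl fun g _ => ?_
    rw [mul_sub, ← zpow_neg_one, ← zpow_add₀ hy, ← zpow_add_one₀ hy]
    push_cast
    ring_nf
  · push_cast
    ring_nf

noncomputable def qWeight (χ g : ℕ) : RatFunc ℚ := RatFunc.X ^ ((χ : ℤ) - (2 * g + 1))

theorem zpow_neg_X_ne_zpow_X {n : ℕ} (hn : n ≠ 0) :
    (RatFunc.X : RatFunc ℚ) ^ (-(n : ℤ)) ≠ RatFunc.X ^ (n : ℤ) := by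
  intro h
  have h1 : (RatFunc.X : RatFunc ℚ) ^ ((n : ℤ) + n) = 1 := by
    rw [zpow_add₀ RatFunc.X_ne_zero]
    nth_rw 1 [← h]
    rw [← zpow_add₀ RatFunc.X_ne_zero, neg_add_cancel, zpow_zero]
  rw [← Nat.cast_add, zpow_natCast] at h1
  have h2 : (Polynomial.X ^ (n + n) : Polynomial ℚ) = 1 :=
    RatFunc.algebraMap_injective ℚ (by simpa using h1)
  simpa [hn] using congrArg Polynomial.natDegree h2

theorem qIntF_ne_zero {n : ℕ} (hn : n ≠ 0) : qIntF n ≠ 0 := by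
  intro h
  have := sum_zpow_mul_inv_sub (RatFunc.X_ne_zero (K := ℚ)) n
  rw [← qIntF, h, zero_mul, eq_comm, sub_eq_zero] at this
  exact zpow_neg_X_ne_zpow_X hn this

theorem qIntF_mul (k χ : ℕ) : qIntF (k * χ) = qIntF k * ∑ g ∈ range χ, qWeight χ g ^ k := by
  have hX : (RatFunc.X : RatFunc ℚ)⁻¹ - RatFunc.X ≠ 0 := by
    simpa [sub_eq_zero] using zpow_neg_X_ne_zpow_X one_ne_zero
  refine mul_right_cancel₀ hX ?_
  have hw : ∀ g, qWeight χ g ^ k = (RatFunc.X ^ k) ^ ((χ : ℤ) - (2 * g + 1)) := fun g => by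
    rw [qWeight, ← zpow_natCast, ← zpow_mul, ← zpow_natCast, ← zpow_mul, mul_comm]
  have hXk : (RatFunc.X : RatFunc ℚ) ^ k ≠ 0 := pow_ne_zero k RatFunc.X_ne_zero
  have hkχ : qIntF (k * χ) * (RatFunc.X⁻¹ - RatFunc.X)
      = RatFunc.X ^ (-((k * χ : ℕ) : ℤ)) - RatFunc.X ^ ((k * χ : ℕ) : ℤ) :=
    sum_zpow_mul_inv_sub (RatFunc.X_ne_zero (K := ℚ)) _
  have hk : qIntF k * (RatFunc.X⁻¹ - RatFunc.X) = (RatFunc.X ^ k)⁻¹ - RatFunc.X ^ k := by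
    rw [qIntF, sum_zpow_mul_inv_sub (RatFunc.X_ne_zero (K := ℚ)), zpow_neg, zpow_natCast]
  rw [hkχ, mul_right_comm, hk, sum_congr rfl fun g _ => hw g, mul_comm _ (∑ g ∈ range χ, _),
    sum_zpow_mul_inv_sub hXk, ← zpow_natCast, ← zpow_mul, ← zpow_mul]
  push_cast
  ring_nf

theorem qIntF_mul_div (χ : ℕ) {n : ℕ} (hn : n ≠ 0) :
    qIntF (n * χ) * n / qIntF n = (∑ g ∈ range χ, qWeight χ g ^ n) * n := by
  rw [qIntF_mul]
  field_simp [qIntF_ne_zero hn]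

/-- `θ D / D` for `D = ∏_g (1 + qWeight χ g • X)`. -/
noncomputable def weightLogDeriv (χ : ℕ) : (RatFunc ℚ)⟦X⟧ :=
  ∑ g ∈ range χ, (1 - rescale (-qWeight χ g) (mk 1))

theorem eulerOp_prod_one_add_qWeight_mul_X (χ : ℕ) :
    eulerOp (∏ g ∈ range χ, (1 + C (qWeight χ g) * X))
      = weightLogDeriv χ * ∏ g ∈ range χ, (1 + C (qWeight χ g) * X) :=
  eulerOp_prod _ _ _ fun _ _ => eulerOp_one_add_C_mul_X _

theorem coeff_weightLogDeriv_zero (χ : ℕ) : coeff 0 (weightLogDeriv χ) = 0 := by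
  rw [weightLogDeriv, map_sum]
  exact sum_eq_zero fun g _ => by rw [map_sub, coeff_rescale, coeff_one, coeff_mk]; simp

theorem coeff_weightLogDeriv (χ : ℕ) {k : ℕ} (hk : k ≠ 0) :
    coeff k (weightLogDeriv χ) = ((-1 : ℤ) ^ (k + 1)) • ∑ g ∈ range χ, qWeight χ g ^ k := by
  rw [weightLogDeriv, map_sum, smul_sum]
  refine sum_congr rfl fun g _ => ?_
  rw [map_sub, coeff_one, if_neg hk, coeff_rescale, coeff_mk, Pi.one_apply, mul_one, zero_sub,
    neg_pow, zsmul_eq_mul]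
  push_cast
  ring

theorem coeff_eulerOp_neg_mk_neg_one_pow_mul_inv_smul {R : Type*} [Ring R] [Algebra ℚ R]
    (x : ℕ → R) {k : ℕ} (hk : k ≠ 0) :
    coeff k (eulerOp (-(mk fun r => (((-1 : ℚ) ^ r) * (r : ℚ)⁻¹) • x r)))
      = ((-1 : ℤ) ^ (k + 1)) • x k := by
  rw [coeff_eulerOp, map_neg, coeff_mk, smul_neg, mul_comm, ← smul_smul,
    nsmul_inv_natCast_smul hk, pow_succ, mul_neg_one, neg_smul, ← Int.cast_smul_eq_zsmul ℚ]
  push_cast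
  rfl

section Heisenberg
variable {H : Type*} [Ring H] [Algebra (RatFunc ℚ) H] [Algebra ℚ H]

theorem heisenberg_p_h_commutation (χ : ℕ) (Pp Pm : ℕ → H)
    (hpp : ∀ m n, 1 ≤ m → 1 ≤ n → Commute (Pp m) (Pp n))
    (hrel : ∀ m n, 1 ≤ m → 1 ≤ n →
      Pm m * Pp n = Pp n * Pm m +
        (if m = n then algebraMap (RatFunc ℚ) H (qIntF (n * χ) * n / qIntF n) else 0))
    {hp : ℕ → H} (hhp : mk hp = expH (mk fun r => ((r : ℚ)⁻¹) • Pp r)) {k : ℕ} (hk : 1 ≤ k) :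
    C (Pm k) * mk hp = mk hp *
      (C (Pm k) + C (algebraMap (RatFunc ℚ) H (∑ g ∈ range χ, qWeight χ g ^ k)) * X ^ k) := by
  set z := algebraMap (RatFunc ℚ) H (∑ g ∈ range χ, qWeight χ g ^ k) with hz_def
  have hz : ∀ y, Commute z y := fun y => Algebra.commutes _ y
  have hF : eulerOp (mk hp) = eulerOp (mk fun r => ((r : ℚ)⁻¹) • Pp r) * mk hp := by
    rw [hhp]
    exact eulerOp_expH (by simp) fun i j => by
      simpa using commute_rat_smul_of_commute hpp (s := fun r => (r : ℚ)⁻¹) (by simp) i j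
  refine C_mul_eq_mul_C_add_of_eulerOp_eq_mul hF (constantCoeff_eulerOp _)
    (by rw [hhp, constantCoeff_expH])
    (by rw [map_mul, map_pow, constantCoeff_X, zero_pow (by omega), mul_zero]) ?_ ?_
  · rw [eulerOp_C_mul_X_pow]
    exact ((commute_C_of_forall_commute hz _).mul_left (commute_X_pow _ _).symm).smul_left k
  · rw [eulerOp_C_mul_X_pow, ← smul_mul_assoc, ← map_nsmul, eulerOp_apply]
    refine C_mul_mk_eq_mk_mul_C_add fun n => ?_
    rcases n.eq_zero_or_pos with rfl | hn
    · simp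
      omega
    rw [coeff_mk, nsmul_inv_natCast_smul hn.ne', hrel k n hk hn]
    rcases eq_or_ne k n with rfl | hkn
    · rw [if_pos rfl, if_pos rfl, qIntF_mul_div χ hn.ne', map_mul, map_natCast, hz_def,
        nsmul_eq_mul, Nat.cast_comm]
    · rw [if_neg hkn, if_neg (Ne.symm hkn)]

theorem heisenberg_eExponent_commutation (χ : ℕ) (Pm : ℕ → H) {a : H⟦X⟧}
    (hcomm : ∀ k, 1 ≤ k → C (Pm k) * a = a *
      (C (Pm k) + C (algebraMap (RatFunc ℚ) H (∑ g ∈ range χ, qWeight χ g ^ k)) * X ^ k))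
    (k : ℕ) :
    C (coeff k (eulerOp (-(mk fun r => (((-1 : ℚ) ^ r) * (r : ℚ)⁻¹) • Pm r)))) * a
      = a * (C (coeff k (eulerOp (-(mk fun r => (((-1 : ℚ) ^ r) * (r : ℚ)⁻¹) • Pm r))))
        + X ^ k * C (algebraMap (RatFunc ℚ) H (coeff k (weightLogDeriv χ)))) := by
  rcases k.eq_zero_or_pos with rfl | hk
  · rw [coeff_weightLogDeriv_zero, coeff_eulerOp, zero_smul]
    simp
  rw [coeff_eulerOp_neg_mk_neg_one_pow_mul_inv_smul _ hk.ne', coeff_weightLogDeriv χ hk.ne',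
    map_zsmul, map_zsmul, map_zsmul, smul_mul_assoc, hcomm k hk, mul_smul_comm,
    ← (commute_X_pow _ k).eq, ← smul_add, mul_smul_comm]

end Heisenberg

theorem heisenberg_e_h_commutation_general
    (H : Type*) [Ring H] [Algebra (RatFunc ℚ) H] [Algebra ℚ H]
    (χ : ℕ) (Pp Pm : ℕ → H)
    (hpp : ∀ m n, 1 ≤ m → 1 ≤ n → Commute (Pp m) (Pp n))
    (hmm : ∀ m n, 1 ≤ m → 1 ≤ n → Commute (Pm m) (Pm n))
    (hrel : ∀ m n, 1 ≤ m → 1 ≤ n →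
      Pm m * Pp n = Pp n * Pm m +
        (if m = n then algebraMap (RatFunc ℚ) H (qIntF (n * χ) * n / qIntF n) else 0))
    (hp em : ℕ → H)
    (hhp : PowerSeries.mk hp = expH (PowerSeries.mk fun r => ((r : ℚ)⁻¹) • Pp r))
    (hem : PowerSeries.mk em =
      expH (-(PowerSeries.mk fun r => (((-1 : ℚ) ^ r) * (r : ℚ)⁻¹) • Pm r)))
    (d : ℕ → RatFunc ℚ)
    (hd : PowerSeries.mk d =
        ∏ g ∈ Finset.range χ,
          (1 + PowerSeries.C (R := RatFunc ℚ) (RatFunc.X ^ ((χ : ℤ) - (2 * g + 1))) *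
            PowerSeries.X))
    (m n : ℕ) :
    em n * hp m =
      ∑ r ∈ Finset.range (min m n + 1),
        algebraMap (RatFunc ℚ) H (d r) * (hp (m - r) * em (n - r)) := by
  have hE : eulerOp (mk em)
      = eulerOp (-(mk fun r => (((-1 : ℚ) ^ r) * (r : ℚ)⁻¹) • Pm r)) * mk em := by
    rw [hem]
    exact eulerOp_expH (by simp) fun i j => by
      simpa using (commute_rat_smul_of_commute hmm
        (s := fun r => (-1 : ℚ) ^ r * (r : ℚ)⁻¹) (by simp) i j)
  have hD : eulerOp (mk d) = weightLogDeriv χ * mk d := by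
    rw [hd]
    exact eulerOp_prod_one_add_qWeight_mul_X χ
  have key : map C (mk em) * C (mk hp)
      = C (mk hp) * rescaleByX (algebraMap (RatFunc ℚ) H) (mk d) * map C (mk em) :=
    mul_C_eq_C_mul_mul_of_eulerOp_eq_mul (by rw [eulerOp_map, hE, map_mul])
      (by rw [constantCoeff_map, constantCoeff_eulerOp, map_zero])
      (by rw [constantCoeff_map, hem, constantCoeff_expH, map_one])
      (by rw [eulerOp_rescaleByX, hD, map_mul]) (by simp [constantCoeff_rescaleByX, hd])
      (commute_rescaleByX_map_C _ _)
      (map_C_mul_C_eq (heisenberg_eExponent_commutation χ Pm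
        fun k hk => heisenberg_p_h_commutation χ Pp Pm hpp hrel hhp hk))
  simpa [coeff_coeff_C_mul_rescaleByX_mul_map_C, coeff_mul_C] using
    congrArg (fun F => coeff m (coeff n F)) key

/-- in the quantum Heisenberg algebra `H` with `χ ∈ ℤ_{≥0}`,
with `h⁺_n` as before and `e⁻_n` defined by
`Σ e⁻_n t^n = exp(-Σ_{r≥1} p⁻_r (-t)^r/r)`, we have
`e⁻_n h⁺_m = Σ_{r=0}^{min(m,n)} d_r h⁺_{m-r} e⁻_{n-r}`, where
`Σ_r d_r u^r = Π_{g=0}^{χ-1} (1 + q^{χ-(2g+1)} u)`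
(i.e. `d_r = qdim(Λ^r V)` for `V` with `qdim(V) = [χ]`). -/
theorem heisenberg_e_h_commutation
    (H : Type*) [Ring H] [Algebra (RatFunc ℚ) H] [Algebra ℚ H]
    [IsScalarTower ℚ (RatFunc ℚ) H]
    (χ : ℕ) (Pp Pm : ℕ → H)
    (hpp : ∀ m n, 1 ≤ m → 1 ≤ n → Commute (Pp m) (Pp n))
    (hmm : ∀ m n, 1 ≤ m → 1 ≤ n → Commute (Pm m) (Pm n))
    (hrel : ∀ m n, 1 ≤ m → 1 ≤ n →
      Pm m * Pp n = Pp n * Pm m +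
        (if m = n then algebraMap (RatFunc ℚ) H (qIntF (n * χ) * n / qIntF n) else 0))
    (hp em : ℕ → H)
    (hhp : PowerSeries.mk hp = expH (PowerSeries.mk fun r => ((r : ℚ)⁻¹) • Pp r))
    (hem : PowerSeries.mk em =
      expH (-(PowerSeries.mk fun r => (((-1 : ℚ) ^ r) * (r : ℚ)⁻¹) • Pm r)))
    (d : ℕ → RatFunc ℚ)
    (hd : PowerSeries.mk d =
        ∏ g ∈ Finset.range χ,
          (1 + PowerSeries.C (R := RatFunc ℚ) (RatFunc.X ^ ((χ : ℤ) - (2 * g + 1))) *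
            PowerSeries.X))
    (m n : ℕ) :
    em n * hp m =
      ∑ r ∈ Finset.range (min m n + 1),
        algebraMap (RatFunc ℚ) H (d r) * (hp (m - r) * em (n - r)) :=
  heisenberg_e_h_commutation_general H χ Pp Pm hpp hmm hrel hp em hhp hem d hd m n
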